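/- Fix b ≠ 0 and ω with 0 < ω < |b|/2. Let 0 < q < q' ≤ 2, and suppose q satisfies the non-thresholding condition: q ≥ 1, or q < 1 and ω < (|b|/(2−q))·(2(1−q))^((1−q)/(2−q))·q^(1/(2−q)). If h is a global minimizer of F(ω, q, b) and h' is a global minimizer of F(ω, q', b), then |h| ≥ |h'| > 0: for ω below |b|/2, nonzero mode-thresholding values are nonincreasing in q. -/

import Mathlib

/-- The scalar objective `F(ω, q, b)(β) = (1/2)(b − β)² + (ω^(2−q)/q)·|β|^q`,
with real-exponent powers (`rpow`). -/
noncomputable def F (ω q b β : ℝ) : ℝ :=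
  (1 / 2) * (b - β) ^ 2 + (ω ^ (2 - q) / q) * |β| ^ q

/-!
Since `F ω p b β = ω² · F 1 p (b/ω) (β/ω)` and `F` only decreases when `b, β` are replaced by
`|b|, |β|`, it suffices to compare nonnegative minimizers `x` (exponent `q`) and `y` (exponent
`q'`) of `f_p(σ) = (B - σ)²/2 + σ^p/p` with `B = |b|/ω > 2`.

The non-thresholding condition provides a point where `f_q < f_q(0) = B²/2`, so `x > 0` is a
critical point: `B - x = x^(q-1)`. In particular `x < B`, and `x ≥ 1`: for `q ≥ 1` directly, for
`q < 1` because `σ + σ^(q-1)` is convex, so `f_q` would still decrease on `[x, 1]`.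
Since `p ↦ log (σ^p/p)` is convex, `σ^q/q ≤ σ^q'/q'` forces `σ^q'/q' ≤ σ²/2`; either way
`f_q'(x) < B²/2`, hence `y > 0`. Finally, adding `f_q(x) ≤ f_q(y)` and `f_q'(y) ≤ f_q'(x)` gives
`φ(y) ≤ φ(x)` for `φ(σ) = σ^q'/q' - σ^q/q`, which is strictly increasing on `[1, ∞)`; as `x ≥ 1`,
this rules out `y > x`.
-/

open Real Set

lemma F_neg (ω p b β : ℝ) : F ω p (-b) (-β) = F ω p b β := by
  simp only [F, abs_neg]
  ring

lemma F_abs_abs_le (ω p b β : ℝ) : F ω p |b| |β| ≤ F ω p b β := by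
  have : (|b| - |β|) ^ 2 ≤ (b - β) ^ 2 :=
    sq_le_sq.mpr (by simpa using abs_abs_sub_abs_le_abs_sub b β)
  simp only [F, abs_abs]
  linarith

lemma isMin_F_abs {ω p b h : ℝ} (hmin : ∀ β, F ω p b h ≤ F ω p b β) (β : ℝ) :
    F ω p |b| |h| ≤ F ω p |b| β := by
  rcases abs_choice b with hb | hb
  · calc F ω p |b| |h| ≤ F ω p b h := F_abs_abs_le ω p b h
      _ ≤ F ω p b β := hmin β
      _ = F ω p |b| β := by rw [hb]
  · calc F ω p |b| |h| ≤ F ω p b h := F_abs_abs_le ω p b h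
      _ ≤ F ω p b (-β) := hmin (-β)
      _ = F ω p |b| β := by rw [hb, ← F_neg, neg_neg]

lemma F_eq_sq_mul_F_one {ω : ℝ} (hω : 0 < ω) (p b β : ℝ) :
    F ω p b β = ω ^ 2 * F 1 p (b / ω) (β / ω) := by
  simp only [F, one_rpow, abs_div, abs_of_pos hω, div_rpow (abs_nonneg β) hω.le, rpow_sub hω,
    rpow_two]
  field_simp

lemma isMin_F_one_div {ω p b h : ℝ} (hω : 0 < ω) (hmin : ∀ β, F ω p b h ≤ F ω p b β) (β : ℝ) :
    F 1 p (b / ω) (h / ω) ≤ F 1 p (b / ω) β := by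
  have := hmin (ω * β)
  rw [F_eq_sq_mul_F_one hω, F_eq_sq_mul_F_one hω, mul_div_cancel_left₀ _ hω.ne'] at this
  exact le_of_mul_le_mul_left this (by positivity)

lemma F_one_of_nonneg (p B : ℝ) {σ : ℝ} (hσ : 0 ≤ σ) : F 1 p B σ = (B - σ) ^ 2 / 2 + σ ^ p / p := by
  simp only [F, one_rpow, abs_of_nonneg hσ]
  ring

lemma ne_zero_of_F_one_lt {p B x : ℝ} (hp : p ≠ 0) (h : F 1 p B x < B ^ 2 / 2) : x ≠ 0 := by
  rintro rfl
  rw [F_one_of_nonneg p B le_rfl, zero_rpow hp] at h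
  norm_num at h

lemma hasDerivAt_F_one {p : ℝ} (hp : p ≠ 0) (B : ℝ) {x : ℝ} (hx : 0 < x) :
    HasDerivAt (F 1 p B) (x - B + x ^ (p - 1)) x := by
  have h := ((((hasDerivAt_id x).const_sub B).pow 2).div_const 2).add
    ((hasDerivAt_rpow_const (p := p) (Or.inl hx.ne')).div_const p)
  refine (h.congr_deriv ?_).congr_of_eventuallyEq
    ((eventually_gt_nhds hx).mono fun σ hσ => F_one_of_nonneg p B hσ.le)
  simp only [id]
  field_simp
  ring

lemma sub_eq_rpow_of_isMin {p B x : ℝ} (hp : p ≠ 0) (hx : 0 < x)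
    (hmin : ∀ β, F 1 p B x ≤ F 1 p B β) : B - x = x ^ (p - 1) := by
  have := IsLocalMin.hasDerivAt_eq_zero (Filter.Eventually.of_forall hmin)
    (hasDerivAt_F_one hp B hx)
  linarith

lemma convexOn_rpow_of_nonpos {r : ℝ} (hr : r ≤ 0) : ConvexOn ℝ (Ioi 0) fun x : ℝ => x ^ r := by
  apply MonotoneOn.convexOn_of_deriv (convex_Ioi 0)
  · exact fun x hx => (continuousAt_rpow_const x r (Or.inl (hx.ne'))).continuousWithinAt
  · rw [interior_Ioi]
    exact fun x hx => (differentiableAt_rpow_const_of_ne r (hx.ne')).differentiableWithinAt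
  · rw [interior_Ioi]
    intro x hx y _ hxy
    simp only [Real.deriv_rpow_const]
    exact mul_le_mul_of_nonpos_left (rpow_le_rpow_of_nonpos hx hxy (by linarith)) hr

lemma one_le_of_isMin {p B x : ℝ} (hp : 0 < p) (hB : 2 < B) (hx : 0 < x)
    (hmin : ∀ β, F 1 p B x ≤ F 1 p B β) : 1 ≤ x := by
  by_contra! hx1
  have hfoc := sub_eq_rpow_of_isMin hp.ne' hx hmin
  rcases le_or_gt 1 p with hp1 | hp1
  · have : x ^ (p - 1) ≤ 1 := rpow_le_one hx.le hx1.le (by linarith)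
    linarith
  have hg : ConvexOn ℝ (Ioi 0) fun σ : ℝ => σ + σ ^ (p - 1) :=
    (convexOn_id (convex_Ioi 0)).add (convexOn_rpow_of_nonpos (by linarith))
  have hslope : ∀ σ ∈ Ioo x 1, σ - B + σ ^ (p - 1) < 0 := by
    intro σ hσ
    by_contra! h
    have := hg.lt_left_of_right_lt hx (zero_lt_one' ℝ) (Ioo_subset_openSegment hσ)
      (by simp only [one_rpow]; linarith)
    linarith
  have hanti : StrictAntiOn (F 1 p B) (Icc x 1) := by
    refine strictAntiOn_of_deriv_neg (convex_Icc x 1) (fun σ hσ =>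
      (hasDerivAt_F_one hp.ne' B (hx.trans_le hσ.1)).continuousAt.continuousWithinAt) ?_
    rw [interior_Icc]
    intro σ hσ
    rw [(hasDerivAt_F_one hp.ne' B (hx.trans hσ.1)).deriv]
    exact hslope σ hσ
  linarith [hanti (left_mem_Icc.2 hx1.le) (right_mem_Icc.2 hx1.le) hx1, hmin 1]

lemma F_one_one_lt_of_one_le {q B : ℝ} (hq : 1 ≤ q) (hB : 3 / 2 < B) : F 1 q B 1 < B ^ 2 / 2 := by
  rw [F_one_of_nonneg q B zero_le_one, one_rpow]
  have : 1 / q ≤ 1 := div_le_one_of_le₀ hq (by linarith)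
  nlinarith

lemma F_one_lt_of_threshold {q B : ℝ} (hq0 : 0 < q) (hq1 : q < 1) (hB : 0 < B)
    (hT : 1 < B / (2 - q) * (2 * (1 - q)) ^ ((1 - q) / (2 - q)) * q ^ (1 / (2 - q))) :
    F 1 q B (2 * (1 - q) * (B / (2 - q))) < B ^ 2 / 2 := by
  set a := B / (2 - q) with ha_def
  set σ := 2 * (1 - q) * a with hσ_def
  have h2q : 0 < 2 - q := by linarith
  have ha : 0 < a := div_pos hB h2q
  have hσ : 0 < σ := by positivity
  have hpow : (a * (2 * (1 - q)) ^ ((1 - q) / (2 - q)) * q ^ (1 / (2 - q))) ^ (2 - q)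
      = q * a * σ ^ (1 - q) := by
    have e1 : ((2 * (1 - q)) ^ ((1 - q) / (2 - q))) ^ (2 - q) = (2 * (1 - q)) ^ (1 - q) := by
      rw [← rpow_mul (by linarith), div_mul_cancel₀ _ h2q.ne']
    have e2 : (q ^ (1 / (2 - q))) ^ (2 - q) = q := by
      rw [← rpow_mul hq0.le, one_div_mul_cancel h2q.ne', rpow_one]
    have e3 : a ^ (2 - q) = a * a ^ (1 - q) := by
      rw [show 2 - q = 1 + (1 - q) by ring, rpow_add ha, rpow_one]
    rw [mul_rpow (by positivity) (by positivity), mul_rpow ha.le (by positivity), e1, e2, e3,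
      mul_rpow (by linarith) ha.le]
    ring
  have h1 : 1 < q * a * σ ^ (1 - q) := hpow ▸ one_lt_rpow hT h2q
  -- the test point σ satisfies `B - σ / 2 = a`, so `F σ < B² / 2` reads `σ ^ q < q a σ`
  have h2 : σ ^ q < q * a * σ := by
    calc σ ^ q = 1 * σ ^ q := (one_mul _).symm
      _ < q * a * σ ^ (1 - q) * σ ^ q := mul_lt_mul_of_pos_right h1 (rpow_pos_of_pos hσ q)
      _ = q * a * σ := by rw [mul_assoc, ← rpow_add hσ, sub_add_cancel, rpow_one]
  have hB' : B = (2 - q) * a := by rw [ha_def]; field_simp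
  have h3 : σ ^ q / q < a * σ := by
    rw [div_lt_iff₀ hq0]
    linarith
  have h4 : (B - σ) ^ 2 / 2 = B ^ 2 / 2 - a * σ := by
    rw [hB', hσ_def]
    ring
  rw [F_one_of_nonneg q B hσ.le, h4]
  linarith

lemma rpow_div_le_sq_div_two {u q q' : ℝ} (hu : 0 < u) (hq : 0 < q) (hqq' : q < q')
    (hq'2 : q' ≤ 2) (h : u ^ q / q ≤ u ^ q' / q') : u ^ q' / q' ≤ u ^ 2 / 2 := by
  have hexp : ∀ p, 0 < p → u ^ p / p = exp (log u * p - log p) := by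
    intro p hp
    rw [exp_sub, exp_log hp, rpow_def_of_pos hu]
  have hψ : ConvexOn ℝ (Ioi 0) fun p => log u * p - log p :=
    ((LinearMap.lsmul ℝ ℝ (log u)).convexOn (convex_Ioi 0)).sub strictConcaveOn_log_Ioi.concaveOn
  rw [hexp q hq, hexp q' (hq.trans hqq'), exp_le_exp] at h
  rw [← rpow_two, hexp q' (hq.trans hqq'), hexp 2 two_pos, exp_le_exp]
  exact hψ.le_right_of_left_le'' hq (mem_Ioi.2 two_pos) hqq' hq'2 h

lemma F_one_lt_of_lt_exponent {q q' B x : ℝ} (hq : 0 < q) (hqq' : q < q') (hq'2 : q' ≤ 2)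
    (hx : 0 < x) (hxB : x < B) (h : F 1 q B x < B ^ 2 / 2) : F 1 q' B x < B ^ 2 / 2 := by
  rw [F_one_of_nonneg q B hx.le] at h
  rw [F_one_of_nonneg q' B hx.le]
  rcases le_total (x ^ q / q) (x ^ q' / q') with hle | hle
  · have := rpow_div_le_sq_div_two hx hq hqq' hq'2 hle
    nlinarith
  · linarith

lemma strictMonoOn_rpow_div_sub_rpow_div {q q' : ℝ} (hq : 0 < q) (hqq' : q < q') :
    StrictMonoOn (fun x : ℝ => x ^ q' / q' - x ^ q / q) (Ici 1) := by
  have hderiv : ∀ x : ℝ, 0 < x →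
      HasDerivAt (fun x : ℝ => x ^ q' / q' - x ^ q / q) (x ^ (q' - 1) - x ^ (q - 1)) x := by
    intro x hx
    have := ((hasDerivAt_rpow_const (p := q') (Or.inl hx.ne')).div_const q').sub
      ((hasDerivAt_rpow_const (p := q) (Or.inl hx.ne')).div_const q)
    rwa [mul_div_cancel_left₀ _ (hq.trans hqq').ne', mul_div_cancel_left₀ _ hq.ne'] at this
  refine strictMonoOn_of_deriv_pos (convex_Ici 1) (fun x hx =>
    (hderiv x (zero_lt_one.trans_le hx)).continuousAt.continuousWithinAt) ?_
  rw [interior_Ici]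
  intro x hx
  rw [(hderiv x (zero_lt_one.trans hx)).deriv, sub_pos]
  exact rpow_lt_rpow_of_exponent_lt hx (by linarith)

theorem le_and_pos_of_isMin_F_one {B q q' x y σ : ℝ} (hB : 2 < B) (hq : 0 < q) (hqq' : q < q')
    (hq'2 : q' ≤ 2) (hx : 0 ≤ x) (hy : 0 ≤ y) (hσ : F 1 q B σ < B ^ 2 / 2)
    (hmin : ∀ β, F 1 q B x ≤ F 1 q B β) (hmin' : ∀ β, F 1 q' B y ≤ F 1 q' B β) :
    y ≤ x ∧ 0 < y := by
  have hlow : F 1 q B x < B ^ 2 / 2 := (hmin σ).trans_lt hσ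
  have hxpos : 0 < x := hx.lt_of_ne (ne_zero_of_F_one_lt hq.ne' hlow).symm
  have hxB : x < B := by
    linarith [sub_eq_rpow_of_isMin hq.ne' hxpos hmin, rpow_pos_of_pos hxpos (q - 1)]
  have hypos : 0 < y := hy.lt_of_ne (ne_zero_of_F_one_lt (hq.trans hqq').ne'
    ((hmin' x).trans_lt (F_one_lt_of_lt_exponent hq hqq' hq'2 hxpos hxB hlow))).symm
  refine ⟨le_of_not_gt fun hxy => ?_, hypos⟩
  have hx1 := one_le_of_isMin hq hB hxpos hmin
  have hmono := strictMonoOn_rpow_div_sub_rpow_div hq hqq' hx1 (hx1.trans hxy.le) hxy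
  have e := add_le_add (hmin y) (hmin' x)
  rw [F_one_of_nonneg q B hx, F_one_of_nonneg q B hy, F_one_of_nonneg q' B hx,
    F_one_of_nonneg q' B hy] at e
  dsimp only at hmono
  linarith

theorem magnitude_nonincreasing_in_q_general (b ω q q' h h' : ℝ)
    (hω : 0 < ω) (hωb : ω < |b| / 2)
    (hq0 : 0 < q) (hqq' : q < q') (hq'2 : q' ≤ 2)
    (hcond : 1 ≤ q ∨ (q < 1 ∧
      ω < (|b| / (2 - q)) * (2 * (1 - q)) ^ ((1 - q) / (2 - q)) * q ^ (1 / (2 - q))))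
    (hmin : ∀ β : ℝ, F ω q b h ≤ F ω q b β)
    (hmin' : ∀ β : ℝ, F ω q' b h' ≤ F ω q' b β) :
    |h'| ≤ |h| ∧ 0 < |h'| := by
  have hB : 2 < |b| / ω := by rw [lt_div_iff₀ hω]; linarith
  obtain ⟨σ, hσ⟩ : ∃ σ, F 1 q (|b| / ω) σ < (|b| / ω) ^ 2 / 2 := by
    rcases hcond with hq1 | ⟨hq1, hT⟩
    · exact ⟨1, F_one_one_lt_of_one_le hq1 (by linarith)⟩
    · refine ⟨_, F_one_lt_of_threshold hq0 hq1 (by linarith) ?_⟩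
      rw [show |b| / ω / (2 - q) * (2 * (1 - q)) ^ ((1 - q) / (2 - q)) * q ^ (1 / (2 - q))
        = |b| / (2 - q) * (2 * (1 - q)) ^ ((1 - q) / (2 - q)) * q ^ (1 / (2 - q)) / ω by ring]
      exact (one_lt_div hω).2 hT
  have := le_and_pos_of_isMin_F_one hB hq0 hqq' hq'2 (by positivity) (by positivity) hσ
    (isMin_F_one_div hω (isMin_F_abs hmin)) (isMin_F_one_div hω (isMin_F_abs hmin'))
  rwa [div_le_div_iff_of_pos_right hω, div_pos_iff_of_pos_right hω] at this

/-- For `b ≠ 0` and `0 < ω < |b|/2`: if `0 < q < q' ≤ 2`, `q` satisfies the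
non-thresholding condition, `h` is a global minimizer of `F ω q b`, and `h'`
is a global minimizer of `F ω q' b`, then `|h| ≥ |h'| > 0`. -/
theorem magnitude_nonincreasing_in_q (b ω q q' h h' : ℝ) (hb : b ≠ 0)
    (hω : 0 < ω) (hωb : ω < |b| / 2)
    (hq0 : 0 < q) (hqq' : q < q') (hq'2 : q' ≤ 2)
    (hcond : 1 ≤ q ∨ (q < 1 ∧
      ω < (|b| / (2 - q)) * (2 * (1 - q)) ^ ((1 - q) / (2 - q)) * q ^ (1 / (2 - q))))
    (hmin : ∀ β : ℝ, F ω q b h ≤ F ω q b β)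
    (hmin' : ∀ β : ℝ, F ω q' b h' ≤ F ω q' b β) :
    |h'| ≤ |h| ∧ 0 < |h'| :=
  magnitude_nonincreasing_in_q_general b ω q q' h h' hω hωb hq0 hqq' hq'2 hcond hmin hmin'
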